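/- arXiv:1401.6092 — 6 statements merged into one kernel-verified Lean document; each statement's English description precedes it below -/
import Mathlib

section
/- For the simple line with n nodes and uniform weight vector, the non-normalized PageRank of node i is R_i = (1 - c^{n-i+1})/(1 - c), i.e., the i-th entry of (I - cA^T)^{-1} applied to the all-ones vector equals the geometric sum 1 + c + ... + c^{n-i}. -/
open Matrix

/-! On the line, `Aᵀ` shifts a vector one node towards the end of the line, so
`(1 - c Aᵀ) R = e` reads `R i = 1 + c R (i + 1)` with `R` vanishing past the last node. The
geometric sums `(1 - c ^ (n - i)) / (1 - c)` solve this recursion, and `1 - c Aᵀ` is unipotent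
upper triangular, hence invertible, so they are the PageRank vector. -/

theorem Matrix.det_one_sub_of_strictlyUpper {ι R : Type*} [Fintype ι] [DecidableEq ι]
    [LinearOrder ι] [CommRing R] {N : Matrix ι ι R} (hN : ∀ i j, j ≤ i → N i j = 0) :
    (1 - N).det = 1 := by
  have hupper : (1 - N).IsUpperTriangular := fun i j (hji : j < i) => by
    rw [sub_apply, one_apply_ne hji.ne', hN i j hji.le, sub_zero]
  simp [det_of_isUpperTriangular hupper, hN]

theorem one_sub_pow_succ_div {K : Type*} [Field K] {c : K} (hc : c ≠ 1) (k : ℕ) :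
    (1 - c ^ (k + 1)) / (1 - c) = 1 + c * ((1 - c ^ k) / (1 - c)) := by
  have : 1 - c ≠ 0 := sub_ne_zero.mpr hc.symm
  field_simp
  ring

section Line

variable {R : Type*} [CommRing R] {n : ℕ} {A : Matrix (Fin n) (Fin n) R}

theorem line_transpose_apply_eq_zero
    (hA : ∀ i j : Fin n, A i j = if (i : ℕ) = (j : ℕ) + 1 then 1 else 0) {i j : Fin n}
    (hji : j ≤ i) : Aᵀ i j = 0 := by
  rw [transpose_apply, hA, if_neg]
  have : (j : ℕ) ≤ i := hji
  omega

/-- `n - j` is the number of nodes from `j` to the end of the line, and `u 0 = 0` plays the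
value at the missing node past the end. -/
theorem line_transpose_mulVec
    (hA : ∀ i j : Fin n, A i j = if (i : ℕ) = (j : ℕ) + 1 then 1 else 0) (u : ℕ → R)
    (hu : u 0 = 0) :
    Aᵀ *ᵥ (fun j : Fin n => u (n - j)) = fun i : Fin n => u (n - (i + 1)) := by
  funext i
  simp only [mulVec, dotProduct, transpose_apply, hA, ite_mul, one_mul, zero_mul]
  by_cases hi : (i : ℕ) + 1 < n
  · rw [Fintype.sum_eq_single ⟨i + 1, hi⟩ fun j hj => if_neg fun h => hj (Fin.ext h)]
    simp
  · rw [Finset.sum_eq_zero fun j _ => if_neg (by omega), Nat.sub_eq_zero_of_le (by omega), hu]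

end Line

-- Index `i : Fin n` is node `i + 1` of the line.
theorem line_pagerank_general (n : ℕ) (c : ℝ) (hc1 : c < 1)
    (A : Matrix (Fin n) (Fin n) ℝ)
    (hA : ∀ i j : Fin n, A i j = if (i : ℕ) = (j : ℕ) + 1 then 1 else 0)
    (R : Fin n → ℝ)
    (hR : R = (1 - c • A.transpose)⁻¹ *ᵥ fun _ => 1) :
    ∀ i : Fin n, R i = (1 - c ^ (n - (i : ℕ))) / (1 - c) := by
  set u : ℕ → ℝ := fun k => (1 - c ^ k) / (1 - c)
  have hdet : (1 - c • Aᵀ).det = 1 := det_one_sub_of_strictlyUpper fun i j hji => by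
    rw [Matrix.smul_apply, line_transpose_apply_eq_zero hA hji, smul_zero]
  have hsolve : (1 - c • Aᵀ) *ᵥ (fun j : Fin n => u (n - j)) = fun _ => 1 := by
    rw [sub_mulVec, one_mulVec, smul_mulVec, line_transpose_mulVec hA u (by simp [u])]
    funext i
    have hsucc : n - (i : ℕ) = n - (i + 1) + 1 := by omega
    simp only [Pi.sub_apply, Pi.smul_apply, smul_eq_mul, hsucc, u,
      one_sub_pow_succ_div hc1.ne]
    ring
  intro i
  rw [hR, ← hsolve, mulVec_mulVec, nonsing_inv_mul _ (by simp [hdet]), one_mulVec]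

/-- For the simple line with `n` nodes and uniform weight vector, the non-normalized
PageRank of node `i` (node numbers `1,…,n`, here index `i : Fin n` is node `i+1`) is
`(1 - c^(n-i))/(1-c)`, i.e. the geometric sum `1 + c + ⋯ + c^(n-i-1)`. -/
theorem line_pagerank (n : ℕ) (c : ℝ) (hc0 : 0 < c) (hc1 : c < 1)
    (A : Matrix (Fin n) (Fin n) ℝ)
    (hA : ∀ i j : Fin n, A i j = if (i : ℕ) = (j : ℕ) + 1 then 1 else 0)
    (R : Fin n → ℝ)
    (hR : R = (1 - c • A.transpose)⁻¹ *ᵥ fun _ => 1) :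
    ∀ i : Fin n, R i = (1 - c ^ (n - (i : ℕ))) / (1 - c) :=
  line_pagerank_general n c hc1 A hA R hR
end

section
/- Consider the complete graph on n ≥ 2 nodes where node 1 additionally links out of the graph (so node 1 has n outgoing links of weight 1/n each, of which n-1 go to the other graph nodes, and every other node has n-1 links of weight 1/(n-1) to the others). Then the non-normalized PageRank of node 1 is (n(n-1) + nc)/(n(n-1) - (n-1)c² - n(n-2)c), and that of every other node i is ((c+n)(n-1))/(n(n-1) - (n-1)c² - n(n-2)c). -/
/-!
Every node `j` spreads one weight `d j` over all other nodes, so `(Aᵀ v) i = ∑ⱼ d j v j - d i v i`.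
For a vector taking the value `a` at node 1 and `b` elsewhere this is again such a vector, and
`(1 - c Aᵀ) v = 1` reduces to the two balance equations `a - c b = 1` and
`b - c (a / n + (n - 2) b / (n - 1)) = 1`, solved by the stated values. The matrix `1 - c Aᵀ` is
invertible because its off-diagonal entries are negative and, the column sums of `A` being at
most `1`, its row sums are positive.
-/

open Matrix

section

variable {ι R : Type*} [Fintype ι] [DecidableEq ι]

theorem Fintype.sum_ite_eq_add_card_sub_one_mul [CommRing R] (o : ι) (x y : R) :
    ∑ j, (if j = o then x else y) = x + ((Fintype.card ι : R) - 1) * y := by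
  have hcard : 1 ≤ Fintype.card ι := Fintype.card_pos_iff.mpr ⟨o⟩
  rw [Fintype.sum_eq_add_sum_compl o, if_pos rfl,
    Finset.sum_congr rfl fun j hj => if_neg (Finset.mem_compl.mp hj ∘ Finset.mem_singleton.mpr),
    Finset.sum_const, Finset.card_compl, Finset.card_singleton, nsmul_eq_mul,
    Nat.cast_sub hcard, Nat.cast_one]

theorem transpose_mulVec_apply_of_uniform_outlinks [CommRing R] {A : Matrix ι ι R} {d : ι → R}
    (hA : ∀ i j, A i j = if i = j then 0 else d i) (v : ι → R) (i : ι) :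
    (Aᵀ *ᵥ v) i = ∑ j, d j * v j - d i * v i := by
  have hsplit : ∀ j, Aᵀ i j * v j = d j * v j - if i = j then d j * v j else 0 := by
    intro j
    rw [transpose_apply, hA]
    split_ifs <;> simp_all
  simp only [mulVec, dotProduct, hsplit, Finset.sum_sub_distrib, Finset.sum_ite_eq,
    Finset.mem_univ, if_true]

theorem det_one_sub_smul_ne_zero {A : Matrix ι ι ℝ} (hpos : Pairwise fun i j => 0 < A i j)
    (hsum : ∀ i, ∑ j, A i j ≤ 1) {c : ℝ} (hc0 : 0 < c) (hc1 : c < 1) :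
    (1 - c • A).det ≠ 0 := by
  refine det_ne_zero_of_sum_row_pos (fun i j hij => ?_) (fun i => ?_)
  · simpa [one_apply_ne hij] using mul_pos hc0 (hpos hij)
  · have hrow : ∑ j, (1 - c • A) i j = 1 - c * ∑ j, A i j := by
      simp [Finset.sum_sub_distrib, one_apply, Finset.mul_sum]
    nlinarith [hsum i]

noncomputable section

/-- Node `o` also links out of the graph, so it has `card ι` out-links, one of them external. -/
def oneLinkOutWeight (o i : ι) : ℝ :=
  if i = o then 1 / (Fintype.card ι : ℝ) else 1 / ((Fintype.card ι : ℝ) - 1)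

def oneLinkOutMatrix (o : ι) : Matrix ι ι ℝ :=
  of fun i j => if i = j then 0 else oneLinkOutWeight o i

end

variable [Nontrivial ι]

theorem oneLinkOutMatrix_transpose_mulVec_apply (o : ι) (a b : ℝ) (i : ι) :
    ((oneLinkOutMatrix o)ᵀ *ᵥ fun j => if j = o then a else b) i =
      if i = o then b
      else a / Fintype.card ι + ((Fintype.card ι : ℝ) - 2) * b / ((Fintype.card ι : ℝ) - 1) := by
  have hN : (1 : ℝ) < Fintype.card ι := by exact_mod_cast Fintype.one_lt_card
  have hN₁ : (Fintype.card ι : ℝ) - 1 ≠ 0 := by linarith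
  have hterm : ∀ j, oneLinkOutWeight o j * (if j = o then a else b) =
      if j = o then a / Fintype.card ι else b / ((Fintype.card ι : ℝ) - 1) := fun j => by
    unfold oneLinkOutWeight
    split_ifs <;> ring
  rw [transpose_mulVec_apply_of_uniform_outlinks (A := oneLinkOutMatrix o) (fun i j => rfl),
    Finset.sum_congr rfl fun j _ => hterm j, Fintype.sum_ite_eq_add_card_sub_one_mul, hterm]
  split_ifs
  · field_simp
    ring
  · field_simp
    ring

theorem det_one_sub_smul_oneLinkOutMatrix_transpose_ne_zero (o : ι) {c : ℝ} (hc0 : 0 < c)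
    (hc1 : c < 1) :
    (1 - c • (oneLinkOutMatrix o)ᵀ).det ≠ 0 := by
  have hN : (1 : ℝ) < Fintype.card ι := by exact_mod_cast Fintype.one_lt_card
  refine det_one_sub_smul_ne_zero (fun i j hij => ?_) (fun i => ?_) hc0 hc1
  · simp only [transpose_apply, oneLinkOutMatrix, of_apply, if_neg (Ne.symm hij),
      oneLinkOutWeight]
    split_ifs <;> apply div_pos one_pos <;> linarith
  · have := oneLinkOutMatrix_transpose_mulVec_apply o 1 1 i
    simp only [ite_self, mulVec, dotProduct, mul_one] at this
    rw [this]
    split_ifs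
    · rfl
    · rw [div_add_div _ _ (by positivity) (by linarith), div_le_one (by nlinarith)]
      nlinarith

theorem oneLinkOutMatrix_pageRank (o : ι) {c : ℝ} (hc0 : 0 < c) (hc1 : c < 1) {a b : ℝ}
    (ha : a - c * b = 1)
    (hb : b - c * (a / Fintype.card ι +
      ((Fintype.card ι : ℝ) - 2) * b / ((Fintype.card ι : ℝ) - 1)) = 1) :
    (1 - c • (oneLinkOutMatrix o)ᵀ)⁻¹ *ᵥ (fun _ => 1) = fun i => if i = o then a else b := by
  have hbalance :
      (1 - c • (oneLinkOutMatrix o)ᵀ) *ᵥ (fun i => if i = o then a else b) = fun _ => 1 := by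
    ext i
    rw [sub_mulVec, one_mulVec, smul_mulVec, Pi.sub_apply, Pi.smul_apply,
      oneLinkOutMatrix_transpose_mulVec_apply, smul_eq_mul]
    split_ifs <;> assumption
  rw [← hbalance, mulVec_mulVec, nonsing_inv_mul _
    (det_one_sub_smul_oneLinkOutMatrix_transpose_ne_zero o hc0 hc1).isUnit, one_mulVec]

end

/-- Complete graph on `n ≥ 2` nodes where node `1` (index `0`) additionally links out:
node `1` has `n` outgoing links of weight `1/n` (of which `n-1` stay in the graph),
each other node has `n-1` links of weight `1/(n-1)`. The non-normalized PageRank of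
node `1` is `(n(n-1)+nc)/(n(n-1)-(n-1)c²-n(n-2)c)` and of every other node is
`((c+n)(n-1))/(n(n-1)-(n-1)c²-n(n-2)c)`. -/
theorem complete_graph_one_link_out_pagerank (n : ℕ) (hn : 2 ≤ n) (c : ℝ)
    (hc0 : 0 < c) (hc1 : c < 1)
    (A : Matrix (Fin n) (Fin n) ℝ)
    (hA : ∀ i j : Fin n, A i j =
      if i = j then 0 else if (i : ℕ) = 0 then 1 / (n : ℝ) else 1 / ((n : ℝ) - 1))
    (R : Fin n → ℝ)
    (hR : R = (1 - c • A.transpose)⁻¹ *ᵥ fun _ => 1) :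
    (∀ i : Fin n, (i : ℕ) = 0 →
        R i = ((n : ℝ) * ((n : ℝ) - 1) + (n : ℝ) * c) /
          ((n : ℝ) * ((n : ℝ) - 1) - ((n : ℝ) - 1) * c ^ 2 -
            (n : ℝ) * ((n : ℝ) - 2) * c)) ∧
    (∀ i : Fin n, (i : ℕ) ≠ 0 →
        R i = ((c + (n : ℝ)) * ((n : ℝ) - 1)) /
          ((n : ℝ) * ((n : ℝ) - 1) - ((n : ℝ) - 1) * c ^ 2 -
            (n : ℝ) * ((n : ℝ) - 2) * c)) := by
  have : Nontrivial (Fin n) := Fin.nontrivial_iff_two_le.mpr hn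
  let o : Fin n := ⟨0, by omega⟩
  have hAo : A = oneLinkOutMatrix o := by
    ext i j
    simp [hA, oneLinkOutMatrix, oneLinkOutWeight, o, Fin.ext_iff]
  have hN : (2 : ℝ) ≤ n := by exact_mod_cast hn
  have hN₁ : (n : ℝ) - 1 ≠ 0 := by linarith
  set D : ℝ := n * (n - 1) - (n - 1) * c ^ 2 - n * (n - 2) * c with hD_def
  have hD : 0 < D := by
    have hsplit : D = (1 - c) * (n - 1) * (n + c) + c := by ring
    have := mul_pos (mul_pos (sub_pos.2 hc1) (by linarith : (0 : ℝ) < n - 1))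
      (by linarith : (0 : ℝ) < n + c)
    linarith
  rw [hR, hAo, oneLinkOutMatrix_pageRank (a := (n * (n - 1) + n * c) / D)
    (b := (c + n) * (n - 1) / D) o hc0 hc1 ?_ ?_]
  · exact ⟨fun i hi => if_pos (Fin.ext hi), fun i hi => if_neg (mt Fin.val_eq_of_eq hi)⟩
  · field_simp
    rw [hD_def]
    ring
  · rw [Fintype.card_fin]
    field_simp
    rw [hD_def]
    ring
end

section
/- Probabilistic interpretation of PageRank: for a graph with substochastic transition matrix cA (walk follows a link with total probability c, stops with probability 1-c), the non-normalized PageRank satisfies R_j = (Σ_{i≠j} P(i→j) + 1) · Σ_{k=0}^∞ (P(j→j))^k, where P(i→j) is the probability that a walk started at i ever visits j. Equivalently, R_j = Σ_{k=0}^∞ Σ_i ((cA^T)^k)_{ji}. -/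
/-!
Put `M = c • A`. Its rows are nonnegative with sum `c < 1`, so `M` has ∞-operator norm `c < 1`
and the Neumann series `∑ₖ Mᵏ` converges to `(1 - M)⁻¹`. Since `R = ((1 - M)⁻¹)ᵀ e`, `R j` is
the `j`-th column sum of `(1 - M)⁻¹ = ∑ₖ Mᵏ`, which is the second identity.

The hitting probabilities `p = P(· → j)` solve the first-passage equation
`p = M (p with p j replaced by 1)`, and `0 ≤ p j ≤ c < 1`. From that equation one checks that
`eⱼ + p / (1 - p j)` solves `(1 - M) x = eⱼ`, so it is the `j`-th column of `(1 - M)⁻¹`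
(the renewal decomposition). Summing this column and expanding `(1 - p j)⁻¹` as a geometric
series gives the first identity.
-/

open Matrix Filter Topology Function Set

namespace Matrix

variable {n : Type*} [Fintype n]

theorem mulVec_mem_Icc {M : Matrix n n ℝ} {c : ℝ} (hM : ∀ i l, 0 ≤ M i l)
    (hrow : ∀ i, ∑ l, M i l ≤ c) {v : n → ℝ} (hv : ∀ l, v l ∈ Icc 0 1) (i : n) :
    (M *ᵥ v) i ∈ Icc 0 c := by
  refine ⟨Finset.sum_nonneg fun l _ => mul_nonneg (hM i l) (hv l).1, ?_⟩
  calc (M *ᵥ v) i ≤ ∑ l, M i l * 1 :=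
        Finset.sum_le_sum fun l _ => mul_le_mul_of_nonneg_left (hv l).2 (hM i l)
    _ ≤ c := by simpa using hrow i

variable [DecidableEq n]

section Neumann

attribute [local instance] Matrix.linftyOpNormedRing Matrix.linftyOpNormedAlgebra

theorem linfty_opNorm_lt_one {M : Matrix n n ℝ} (hM : ∀ i, ∑ j, |M i j| < 1) : ‖M‖ < 1 := by
  rw [linfty_opNorm_def, NNReal.coe_lt_one, Finset.sup_lt_iff zero_lt_one]
  intro i _
  rw [← NNReal.coe_lt_one, NNReal.coe_sum]
  simpa only [coe_nnnorm, Real.norm_eq_abs] using hM i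

theorem summable_pow {M : Matrix n n ℝ} (hM : ∀ i, ∑ j, |M i j| < 1) :
    Summable fun k => M ^ k :=
  summable_geometric_of_norm_lt_one (linfty_opNorm_lt_one hM)

end Neumann

theorem tsum_pow_mul_one_sub {M : Matrix n n ℝ} (hM : ∀ i, ∑ j, |M i j| < 1) :
    (∑' k, M ^ k) * (1 - M) = 1 :=
  (summable_pow hM).tsum_pow_mul_one_sub

theorem isUnit_det_one_sub {M : Matrix n n ℝ} (hM : ∀ i, ∑ j, |M i j| < 1) :
    IsUnit (1 - M).det :=
  isUnit_det_of_left_inverse (tsum_pow_mul_one_sub hM)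

theorem hasSum_pow_inv_one_sub {M : Matrix n n ℝ} (hM : ∀ i, ∑ j, |M i j| < 1) :
    HasSum (fun k => M ^ k) (1 - M)⁻¹ := by
  rw [inv_eq_left_inv (tsum_pow_mul_one_sub hM)]
  exact (summable_pow hM).hasSum

theorem hasSum_pow_apply_inv_one_sub {M : Matrix n n ℝ} (hM : ∀ i, ∑ j, |M i j| < 1) (i j : n) :
    HasSum (fun k => (M ^ k) i j) ((1 - M)⁻¹ i j) :=
  Pi.hasSum.mp (Pi.hasSum.mp (hasSum_pow_inv_one_sub hM) i) j

/- `x ↦ M *ᵥ update x j 1` is one step of the first-passage recursion of the killed walk with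
transition matrix `M`: from `i` it moves to `l` with probability `M i l`, and has then hit `j`
if `l = j`. -/
theorem update_mulVec_iterate_mem_Icc {M : Matrix n n ℝ} {c : ℝ} (hM : ∀ i l, 0 ≤ M i l)
    (hrow : ∀ i, ∑ l, M i l ≤ c) (hc0 : 0 ≤ c) (hc1 : c ≤ 1) {j : n} {q : ℕ → n → ℝ}
    (hq0 : q 0 = 0) (hq : ∀ k, q (k + 1) = M *ᵥ update (q k) j 1) (k : ℕ) (i : n) :
    q k i ∈ Icc 0 c := by
  induction k generalizing i with
  | zero => simpa [hq0] using hc0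
  | succ k ih =>
    rw [hq]
    refine mulVec_mem_Icc hM hrow (fun l => ?_) i
    rcases eq_or_ne l j with rfl | hl
    · simp
    · simpa [hl] using Icc_subset_Icc_right hc1 (ih l)

theorem eq_mulVec_update_of_tendsto {M : Matrix n n ℝ} {j : n} {q : ℕ → n → ℝ} {p : n → ℝ}
    (hq : ∀ k, q (k + 1) = M *ᵥ update (q k) j 1) (hp : Tendsto q atTop (𝓝 p)) :
    p = M *ᵥ update p j 1 := by
  have hcont : Continuous fun x : n → ℝ => M *ᵥ update x j 1 := by fun_prop
  refine tendsto_nhds_unique ((tendsto_add_atTop_iff_nat 1).2 hp) ?_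
  simpa only [comp_def, ← hq] using (hcont.tendsto p).comp hp

theorem one_sub_mulVec_single_add_smul {M : Matrix n n ℝ} {j : n} {p : n → ℝ}
    (hp : p = M *ᵥ update p j 1) (hpj : p j ≠ 1) :
    (1 - M) *ᵥ (Pi.single j 1 + (1 - p j)⁻¹ • p) = Pi.single j 1 := by
  have hupd : update p j 1 = p + (1 - p j) • Pi.single j 1 := by
    ext l
    by_cases hl : l = j <;> simp [hl]
  have hMp : M *ᵥ p = p - (1 - p j) • M *ᵥ Pi.single j 1 := by
    nth_rewrite 2 [hp]
    rw [hupd, mulVec_add, mulVec_smul]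
    abel
  rw [sub_mulVec, one_mulVec, mulVec_add, mulVec_smul, hMp, smul_sub, smul_smul,
    inv_mul_cancel₀ (sub_ne_zero.2 hpj.symm), one_smul]
  abel

theorem col_inv_one_sub_of_eq_mulVec_update {M : Matrix n n ℝ} (hM : IsUnit (1 - M).det)
    {j : n} {p : n → ℝ} (hp : p = M *ᵥ update p j 1) (hpj : p j ≠ 1) :
    (1 - M)⁻¹.col j = Pi.single j 1 + (1 - p j)⁻¹ • p := by
  have h := congrArg ((1 - M)⁻¹ *ᵥ ·) (one_sub_mulVec_single_add_smul hp hpj)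
  simp only [mulVec_mulVec, nonsing_inv_mul _ hM, one_mulVec, mulVec_single_one] at h
  exact h.symm

theorem sum_inv_one_sub_apply_of_eq_mulVec_update {M : Matrix n n ℝ} (hM : IsUnit (1 - M).det)
    {j : n} {p : n → ℝ} (hp : p = M *ᵥ update p j 1) (hpj : p j ≠ 1) :
    ∑ i, (1 - M)⁻¹ i j = (∑ i ∈ Finset.univ.filter (· ≠ j), p i + 1) * (1 - p j)⁻¹ := by
  have hcol i : (1 - M)⁻¹ i j = (Pi.single j 1 : n → ℝ) i + (1 - p j)⁻¹ * p i :=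
    congrFun (col_inv_one_sub_of_eq_mulVec_update hM hp hpj) i
  have hsplit := Finset.add_sum_erase Finset.univ p (Finset.mem_univ j)
  rw [Finset.filter_ne', Finset.sum_congr rfl fun i _ => hcol i, Finset.sum_add_distrib,
    Fintype.sum_pi_single', ← Finset.mul_sum, ← hsplit]
  field_simp [sub_ne_zero.2 hpj.symm]
  ring

end Matrix

/-- Probabilistic interpretation of PageRank: for a walk with substochastic
transition matrix `cA` (follow a link with probability `c`, stop with probability
`1-c`), the non-normalized PageRank `R = (I - cAᵀ)⁻¹ e` satisfies
`R j = (Σ_{i≠j} P(i→j) + 1) · Σ_k P(j→j)^k`, where `P i j` is the probability that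
the walk started at `i` ever visits `j` (at a step `≥ 1`), obtained as the limit of
the probabilities `Q k i j` of hitting `j` within `k` steps. Equivalently,
`R j = Σ_k Σ_i ((cAᵀ)^k)_{j i}`. -/
theorem pagerank_probabilistic_interpretation (n : ℕ) (c : ℝ)
    (hc0 : 0 < c) (hc1 : c < 1)
    (A : Matrix (Fin n) (Fin n) ℝ)
    (hA_nonneg : ∀ i j : Fin n, 0 ≤ A i j)
    (hA_rows : ∀ i : Fin n, ∑ j, A i j = 1)
    (R : Fin n → ℝ)
    (hR : R = (1 - c • A.transpose)⁻¹ *ᵥ fun _ => 1)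
    (Q : ℕ → Fin n → Fin n → ℝ)
    (hQ0 : ∀ i j : Fin n, Q 0 i j = 0)
    (hQsucc : ∀ (k : ℕ) (i j : Fin n),
      Q (k + 1) i j = c * ∑ l, A i l * (if l = j then 1 else Q k l j))
    (P : Fin n → Fin n → ℝ)
    (hP : ∀ i j : Fin n,
      Filter.Tendsto (fun k => Q k i j) Filter.atTop (nhds (P i j))) :
    ∀ j : Fin n,
      R j = ((∑ i ∈ Finset.univ.filter (fun i => i ≠ j), P i j) + 1) *
              (∑' k : ℕ, (P j j) ^ k) ∧
      R j = ∑' k : ℕ, ∑ i, ((c • A.transpose) ^ k) j i := by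
  intro j
  set M := c • A
  have hM0 i l : 0 ≤ M i l := mul_nonneg hc0.le (hA_nonneg i l)
  have hMrow i : ∑ l, M i l = c := by simp [M, ← Finset.mul_sum, hA_rows]
  have hMabs i : ∑ l, |M i l| < 1 := by simpa only [abs_of_nonneg (hM0 i _), hMrow] using hc1
  have hq k : (Q (k + 1) · j) = M *ᵥ update (Q k · j) j 1 := by
    ext i
    simp [hQsucc, M, mulVec, dotProduct, update_apply, Finset.mul_sum, mul_assoc]
  have hPj : (P · j) = M *ᵥ update (P · j) j 1 :=
    eq_mulVec_update_of_tendsto hq (tendsto_pi_nhds.2 fun i => hP i j)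
  have hPjj : P j j ∈ Icc 0 c :=
    isClosed_Icc.mem_of_tendsto (hP j j) (Eventually.of_forall fun k =>
      update_mulVec_iterate_mem_Icc (q := fun k i => Q k i j) hM0 (fun i => (hMrow i).le)
        hc0.le hc1.le (funext fun i => hQ0 i j) hq k j)
  have hPjj1 : P j j < 1 := hPjj.2.trans_lt hc1
  have hRj : R j = ∑ i, (1 - M)⁻¹ i j := by
    have hT : 1 - c • Aᵀ = (1 - M)ᵀ := by rw [transpose_sub, transpose_one, transpose_smul]
    rw [hR, hT, ← transpose_nonsing_inv]
    simp [mulVec, dotProduct]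
  refine ⟨?_, ?_⟩
  · rw [hRj, sum_inv_one_sub_apply_of_eq_mulVec_update (isUnit_det_one_sub hMabs) hPj hPjj1.ne,
      tsum_geometric_of_lt_one hPjj.1 hPjj1]
  · simp only [hRj, ← transpose_smul, ← transpose_pow, transpose_apply]
    exact ((hasSum_sum fun i _ => hasSum_pow_apply_inv_one_sub hMabs i j).tsum_eq).symm
end

section
/- Simple line with an extra node linking to node j: the non-normalized PageRank of node i in the line (1 ≤ i ≤ n_L) is R_i = (1 - c^{n_L - i + 1})/(1-c) + b_{ij}, where b_{ij} = c^{j+1-i} if j ≥ i and b_{ij} = 0 if j < i, and the extra node has PageRank 1. -/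
/-!
Every link goes from a higher to a lower index, so `1 - c • Aᵀ` is unit upper triangular, hence
invertible, and `R` is the unique solution of `R = e + c Aᵀ R`. A line node `i` is linked to by
`i + 1` (when that is a line node) and by the extra node (when `i + 1 = j`), so the claimed values
`g i` need only satisfy `g i = 1 + c g (i + 1) + c [i + 1 = j]`, which follows from
`1 + c (1 - cᵐ) / (1 - c) = (1 - cᵐ⁺¹) / (1 - c)`. The end of the line needs no special case
because the formula gives `g nL = 0`.
-/

open Matrix

namespace Matrix

variable {n α : Type*} [Fintype n] [LinearOrder n] [CommRing α]

theorem det_one_sub_eq_one {N : Matrix n n α} (hN : ∀ i j, j ≤ i → N i j = 0) :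
    (1 - N).det = 1 := by
  have hupper : (1 - N).IsUpperTriangular := fun i j (hji : j < i) => by
    rw [sub_apply, one_apply_ne hji.ne', hN i j hji.le, sub_zero]
  rw [det_of_isUpperTriangular hupper]
  simp [hN]

theorem inv_one_sub_mulVec_eq {N : Matrix n n α} (hN : ∀ i j, j ≤ i → N i j = 0)
    {u v : n → α} (h : v - N *ᵥ v = u) : (1 - N)⁻¹ *ᵥ u = v := by
  have hunit : IsUnit (1 - N).det := by rw [det_one_sub_eq_one hN]; exact isUnit_one
  have hv : v - N *ᵥ v = (1 - N) *ᵥ v := by rw [sub_mulVec, one_mulVec]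
  rw [← h, hv, mulVec_mulVec, nonsing_inv_mul _ hunit, one_mulVec]

end Matrix

def lineExtraNodeAdj (nL j : ℕ) : Matrix (Fin (nL + 1)) (Fin (nL + 1)) ℝ :=
  of fun r s => if (r : ℕ) = (s : ℕ) + 1 ∧ (r : ℕ) < nL then 1
    else if (r : ℕ) = nL ∧ (s : ℕ) + 1 = j then 1 else 0

/-- The claimed PageRank of line node `i + 1`: indices are shifted down by one from the paper's. -/
noncomputable def lineRank (c : ℝ) (nL j i : ℕ) : ℝ :=
  (1 - c ^ (nL - i)) / (1 - c) + if i + 1 ≤ j then c ^ (j - i) else 0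

noncomputable def lineExtraNodeRank (c : ℝ) (nL j i : ℕ) : ℝ :=
  if i = nL then 1 else lineRank c nL j i

section

variable {c : ℝ} {nL j : ℕ}

theorem lineExtraNodeAdj_apply_eq_zero_of_le (hj : j ≤ nL) {r s : Fin (nL + 1)} (h : r ≤ s) :
    lineExtraNodeAdj nL j r s = 0 := by
  have := Fin.le_def.1 h
  simp only [lineExtraNodeAdj, of_apply]
  split_ifs <;> first | rfl | omega

theorem lineExtraNodeAdj_transpose_mulVec (y : ℕ → ℝ) (i : Fin (nL + 1)) :
    ((lineExtraNodeAdj nL j)ᵀ *ᵥ fun s => y s) i =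
      (if (i : ℕ) + 1 < nL then y (i + 1) else 0) + (if (i : ℕ) + 1 = j then y nL else 0) := by
  have hsplit : ∀ s : ℕ, (if s = (i : ℕ) + 1 ∧ s < nL then (1 : ℝ)
      else if s = nL ∧ (i : ℕ) + 1 = j then 1 else 0) * y s =
      (if (i : ℕ) + 1 < nL then (if s = (i : ℕ) + 1 then y s else 0) else 0) +
      (if (i : ℕ) + 1 = j then (if s = nL then y s else 0) else 0) := by
    intro s
    split_ifs <;> first | omega | simp_all
  simp only [mulVec, dotProduct, transpose_apply, lineExtraNodeAdj, of_apply]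
  rw [Fin.sum_univ_eq_sum_range (fun s => (if s = (i : ℕ) + 1 ∧ s < nL then (1 : ℝ)
      else if s = nL ∧ (i : ℕ) + 1 = j then 1 else 0) * y s),
    Finset.sum_congr rfl fun s _ => hsplit s, Finset.sum_add_distrib]
  split_ifs <;> simp [Finset.sum_ite_eq'] <;> omega

theorem lineRank_self (hj : j ≤ nL) : lineRank c nL j nL = 0 := by
  simp [lineRank, show ¬ nL + 1 ≤ j by omega]

theorem lineRank_eq_one_add_mul_succ {i : ℕ} (hc : c ≠ 1) (hi : i < nL) :
    lineRank c nL j i = 1 + c * lineRank c nL j (i + 1) + if i + 1 = j then c else 0 := by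
  have hc' : 1 - c ≠ 0 := sub_ne_zero.2 hc.symm
  obtain ⟨k, rfl⟩ : ∃ k, nL = i + 1 + k := ⟨nL - (i + 1), by omega⟩
  simp only [lineRank, show i + 1 + k - i = k + 1 by omega, show i + 1 + k - (i + 1) = k by omega]
  rcases lt_trichotomy (i + 1) j with hlt | rfl | hgt
  · obtain ⟨m, rfl⟩ : ∃ m, j = i + 2 + m := ⟨j - (i + 2), by omega⟩
    simp only [show i + 2 + m - i = m + 2 by omega, show i + 2 + m - (i + 1) = m + 1 by omega,
      if_pos (by omega : i + 1 ≤ i + 2 + m), if_pos (by omega : i + 1 + 1 ≤ i + 2 + m),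
      if_neg (by omega : i + 1 ≠ i + 2 + m)]
    field_simp
    ring
  · simp only [show i + 1 - i = 1 by omega, le_refl, if_true,
      show ¬ i + 1 + 1 ≤ i + 1 by omega, if_false]
    field_simp
    ring
  · simp only [if_neg (by omega : ¬ i + 1 ≤ j), if_neg (by omega : ¬ i + 1 + 1 ≤ j),
      if_neg (by omega : i + 1 ≠ j)]
    field_simp
    ring

theorem lineExtraNodeRank_sub_smul_mulVec (hc : c ≠ 1) (hj : j ≤ nL) :
    ((fun i : Fin (nL + 1) => lineExtraNodeRank c nL j i) -
        (c • (lineExtraNodeAdj nL j)ᵀ) *ᵥ fun i : Fin (nL + 1) => lineExtraNodeRank c nL j i) =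
      fun _ => 1 := by
  funext i
  rw [Pi.sub_apply, smul_mulVec, Pi.smul_apply, lineExtraNodeAdj_transpose_mulVec, smul_eq_mul]
  by_cases hiL : (i : ℕ) = nL
  · rw [hiL]
    simp [lineExtraNodeRank, show nL + 1 ≠ j by omega]
  · have hnext : (if (i : ℕ) + 1 < nL then lineExtraNodeRank c nL j (i + 1) else 0) =
        lineRank c nL j (i + 1) := by
      split_ifs with h
      · rw [lineExtraNodeRank, if_neg h.ne]
      · rw [show (i : ℕ) + 1 = nL by omega, lineRank_self hj]
    rw [hnext, lineExtraNodeRank, if_neg hiL, lineExtraNodeRank, if_pos rfl,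
      lineRank_eq_one_add_mul_succ hc (by omega)]
    split_ifs <;> ring

end

theorem line_with_extra_node_pagerank_general (nL : ℕ)
    (j : ℕ) (hj2 : j ≤ nL) (c : ℝ) (hc1 : c < 1)
    (A : Matrix (Fin (nL + 1)) (Fin (nL + 1)) ℝ)
    (hA : ∀ r s : Fin (nL + 1), A r s =
      if (r : ℕ) = (s : ℕ) + 1 ∧ (r : ℕ) < nL then 1
      else if (r : ℕ) = nL ∧ (s : ℕ) + 1 = j then 1 else 0)
    (R : Fin (nL + 1) → ℝ)
    (hR : R = (1 - c • A.transpose)⁻¹ *ᵥ fun _ => 1) :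
    (∀ i : Fin (nL + 1), (i : ℕ) < nL →
        R i = (1 - c ^ (nL - (i : ℕ))) / (1 - c) +
          (if (i : ℕ) + 1 ≤ j then c ^ (j - (i : ℕ)) else 0)) ∧
    (∀ i : Fin (nL + 1), (i : ℕ) = nL → R i = 1) := by
  have hA : A = lineExtraNodeAdj nL j := Matrix.ext hA
  have hstrict : ∀ r s, s ≤ r → (c • (lineExtraNodeAdj nL j)ᵀ) r s = 0 := fun r s h => by
    rw [Matrix.smul_apply, transpose_apply, lineExtraNodeAdj_apply_eq_zero_of_le hj2 h, smul_zero]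
  obtain rfl : R = fun i : Fin (nL + 1) => lineExtraNodeRank c nL j i := by
    rw [hR, hA]
    exact inv_one_sub_mulVec_eq hstrict (lineExtraNodeRank_sub_smul_mulVec hc1.ne hj2)
  exact ⟨fun i hi => if_neg hi.ne, fun i hi => if_pos hi⟩

/-- Simple line on nodes `1,…,nL` (indices `0,…,nL-1`) with one extra node
(index `nL`) linking to line node `j`: line node `i` (index `i-1`) has
non-normalized PageRank `(1-c^(nL-i+1))/(1-c) + b_{ij}` with `b_{ij} = c^(j+1-i)`
if `j ≥ i`, else `0`; the extra node has PageRank `1`. -/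
theorem line_with_extra_node_pagerank (nL : ℕ) (hnL : 1 ≤ nL)
    (j : ℕ) (hj1 : 1 ≤ j) (hj2 : j ≤ nL) (c : ℝ) (hc0 : 0 < c) (hc1 : c < 1)
    (A : Matrix (Fin (nL + 1)) (Fin (nL + 1)) ℝ)
    (hA : ∀ r s : Fin (nL + 1), A r s =
      if (r : ℕ) = (s : ℕ) + 1 ∧ (r : ℕ) < nL then 1
      else if (r : ℕ) = nL ∧ (s : ℕ) + 1 = j then 1 else 0)
    (R : Fin (nL + 1) → ℝ)
    (hR : R = (1 - c • A.transpose)⁻¹ *ᵥ fun _ => 1) :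
    (∀ i : Fin (nL + 1), (i : ℕ) < nL →
        R i = (1 - c ^ (nL - (i : ℕ))) / (1 - c) +
          (if (i : ℕ) + 1 ≤ j then c ^ (j - (i : ℕ)) else 0)) ∧
    (∀ i : Fin (nL + 1), (i : ℕ) = nL → R i = 1) :=
  line_with_extra_node_pagerank_general nL j hj2 c hc1 A hA R hR
end

section
/- Line node embedded in a complete graph: let node j of a simple line with n_L nodes be a member of a complete graph with n_G ≥ 2 nodes (node j has n_G outgoing links of weight 1/n_G: to node j-1 of the line and to the n_G - 1 other graph nodes). Then R_i = (1-c^{n_L+1-i})/(1-c) for i > j; R_j = ((1-c^{n_L+1-j})/(1-c) + c(n_G-1)/((n_G-1)-c(n_G-2))) · n_G((n_G-1)-c(n_G-2))/(n_G((n_G-1)-c(n_G-2)) - c²(n_G-1)); R_i = c^{j-i} R_j / n_G + (1-c^{j-i})/(1-c) for i < j; and each graph node not in the line has R = ((c+n_G)(n_G-1)(1-c) + (n_G-1)c²(1-c^{n_L-j}))/((1-c)(n_G(n_G-1)-(n_G-1)c²-n_G(n_G-2)c)). -/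
/-!
The PageRank vector `R = (1 - c Aᵀ)⁻¹ 1` is the unique solution of `R = 1 + c Aᵀ R`: the matrix
`1 - c Aᵀ` is strictly diagonally dominant by columns, because `A` is nonnegative with row sums at
most `1` and `|c| < 1`. So it suffices to check that the claimed values satisfy these equations
node by node. Right of node `j` and left of it the equations are the recursion `x ↦ 1 + c x` of
geometric sums, started at `0` at the end of the line and at `R_j / n_G` at node `j - 1`. At node
`j` and at the other graph nodes (which all share one value `R_G`) they form a `2 × 2` linear
system in `(R_j, R_G)`, whose solution is the stated pair.
-/

open Matrix Finset

namespace Matrix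

variable {ι : Type*} [Fintype ι] [DecidableEq ι] {A : Matrix ι ι ℝ} {c : ℝ}

theorem det_one_sub_smul_transpose_ne_zero (hA : ∀ r s, 0 ≤ A r s)
    (hrow : ∀ r, ∑ s, A r s ≤ 1) (hc : |c| < 1) : (1 - c • Aᵀ).det ≠ 0 := by
  refine det_ne_zero_of_sum_col_lt_diag fun k => ?_
  have hoff : ∑ i ∈ univ.erase k, ‖(1 - c • Aᵀ) i k‖ = |c| * (∑ s, A k s - A k k) := by
    rw [← sum_erase_eq_sub (mem_univ k), mul_sum]
    refine sum_congr rfl fun i hi => ?_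
    simp [one_apply_ne (ne_of_mem_erase hi), abs_of_nonneg (hA k i)]
  have hdiag : 1 - |c| * A k k ≤ ‖(1 - c • Aᵀ) k k‖ := by
    simp only [sub_apply, one_apply_eq, smul_apply, transpose_apply, smul_eq_mul, Real.norm_eq_abs]
    calc 1 - |c| * A k k ≤ 1 - c * A k k := by
          linarith [mul_le_mul_of_nonneg_right (le_abs_self c) (hA k k)]
      _ ≤ _ := le_abs_self _
  rw [hoff]
  nlinarith [hrow k, abs_nonneg c]

theorem inv_one_sub_smul_transpose_mulVec_one (hA : ∀ r s, 0 ≤ A r s)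
    (hrow : ∀ r, ∑ s, A r s ≤ 1) (hc : |c| < 1) {x : ι → ℝ}
    (hx : ∀ r, x r = 1 + c * ∑ s, A s r * x s) :
    (1 - c • Aᵀ)⁻¹ *ᵥ (fun _ => 1) = x := by
  have hsol : (1 - c • Aᵀ) *ᵥ x = fun _ => 1 := by
    rw [sub_mulVec, one_mulVec, smul_mulVec]
    ext r
    simp only [Pi.sub_apply, Pi.smul_apply, smul_eq_mul, mulVec, dotProduct, transpose_apply]
    linarith [hx r]
  rw [← hsol, mulVec_mulVec,
    nonsing_inv_mul _ (det_one_sub_smul_transpose_ne_zero hA hrow hc).isUnit, one_mulVec]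

end Matrix

namespace LineInCompleteGraph

noncomputable def hubRank (N c q : ℝ) : ℝ :=
  ((1 - q) / (1 - c) + c * (N - 1) / ((N - 1) - c * (N - 2))) *
    (N * ((N - 1) - c * (N - 2)) / (N * ((N - 1) - c * (N - 2)) - c ^ 2 * (N - 1)))

noncomputable def graphRank (N c p : ℝ) : ℝ :=
  ((c + N) * (N - 1) * (1 - c) + (N - 1) * c ^ 2 * (1 - p)) /
    ((1 - c) * (N * (N - 1) - (N - 1) * c ^ 2 - N * (N - 2) * c))

section Algebra

variable {N c : ℝ}

theorem hubRank_denominators_pos (hN : 2 ≤ N) (hc : |c| < 1) :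
    0 < (N - 1) - c * (N - 2) ∧ 0 < N * ((N - 1) - c * (N - 2)) - c ^ 2 * (N - 1) := by
  obtain ⟨hc0, hc1⟩ := abs_lt.mp hc
  constructor
  · nlinarith
  · have hpos : 0 < (N - 1) * (1 + c) + N * (N - 2) := by nlinarith
    nlinarith [mul_pos (sub_pos.mpr hc1) hpos]

theorem hubRank_graphRank_solve (hN : 2 ≤ N) (hc : |c| < 1) (p : ℝ) :
    hubRank N c (c * p) = 1 + c * ((1 - p) / (1 - c) + graphRank N c p) ∧
    graphRank N c p =
      1 + c * (hubRank N c (c * p) / N +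
        ((N - 1) * graphRank N c p - graphRank N c p) / (N - 1)) := by
  obtain ⟨hD, hE⟩ := hubRank_denominators_pos hN hc
  have h1c : 1 - c ≠ 0 := by linarith [(abs_lt.mp hc).2]
  have hN1 : N - 1 ≠ 0 := by linarith
  unfold hubRank graphRank
  rw [show N * (N - 1) - (N - 1) * c ^ 2 - N * (N - 2) * c =
    N * ((N - 1) - c * (N - 2)) - c ^ 2 * (N - 1) by ring]
  -- as atoms, the denominators are visibly nonzero to `field_simp`
  set D := (N - 1) - c * (N - 2) with hD_def
  set E := N * D - c ^ 2 * (N - 1) with hE_def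
  constructor <;> field_simp <;> rw [hE_def, hD_def] <;> ring

end Algebra

/-- The entry `A r s` of the statement on indices in `ℕ`: the line is `0, …, nL - 1`, node `j` of
the paper is `j - 1`, and its other graph neighbours are `nL, …, nL + nG - 2`. -/
noncomputable def linkWeight (nL nG j r s : ℕ) : ℝ :=
  if r + 1 = j then (if r = s + 1 ∨ nL ≤ s then 1 / (nG : ℝ) else 0)
  else if r < nL then (if r = s + 1 then 1 else 0)
  else (if (nL ≤ s ∧ s ≠ r) ∨ s + 1 = j then 1 / ((nG : ℝ) - 1) else 0)

section Network

variable {nL nG j : ℕ} {c : ℝ}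

theorem sum_range_split {f : ℕ → ℝ} :
    ∑ s ∈ range (nL + (nG - 1)), f s =
      ∑ s ∈ range nL, f s + ∑ s ∈ Ico nL (nL + (nG - 1)), f s :=
  (sum_range_add_sum_Ico f (Nat.le_add_right _ _)).symm

theorem sum_Ico_const (hnG : 1 ≤ nG) (a : ℝ) :
    ∑ _s ∈ Ico nL (nL + (nG - 1)), a = ((nG : ℝ) - 1) * a := by
  rw [sum_const, Nat.card_Ico, Nat.add_sub_cancel_left, nsmul_eq_mul, Nat.cast_sub hnG,
    Nat.cast_one]

theorem sum_linkWeight_mul_of_lt (v : ℕ → ℝ) {r : ℕ} (hr : r + 1 < j) (hjL : j ≤ nL) :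
    ∑ s ∈ range (nL + (nG - 1)), linkWeight nL nG j s r * v s =
      if r + 2 = j then v (r + 1) / nG else v (r + 1) := by
  rw [sum_eq_single (r + 1)]
  · unfold linkWeight; split_ifs <;> first | omega | ring
  · intro s _ hs; unfold linkWeight; split_ifs <;> first | omega | ring
  · intro h; rw [mem_range] at h; omega

theorem sum_linkWeight_mul_hub (v : ℕ → ℝ) (hj0 : 0 < j) (hjL : j ≤ nL) :
    ∑ s ∈ range (nL + (nG - 1)), linkWeight nL nG j s (j - 1) * v s =
      (if j < nL then v j else 0) + (∑ s ∈ Ico nL (nL + (nG - 1)), v s) / ((nG : ℝ) - 1) := by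
  have hline : ∀ s ∈ range nL,
      linkWeight nL nG j s (j - 1) * v s = if j = s then v s else 0 := by
    intro s hs; rw [mem_range] at hs; unfold linkWeight; split_ifs <;> first | omega | ring
  have hgraph : ∀ s ∈ Ico nL (nL + (nG - 1)),
      linkWeight nL nG j s (j - 1) * v s = v s / ((nG : ℝ) - 1) := by
    intro s hs; rw [mem_Ico] at hs; unfold linkWeight; split_ifs <;> first | omega | ring
  rw [sum_range_split, sum_congr rfl hline, sum_congr rfl hgraph, sum_ite_eq, sum_div]
  simp only [mem_range]

theorem sum_linkWeight_mul_of_le_of_lt (v : ℕ → ℝ) {r : ℕ} (hjr : j ≤ r) (hr : r < nL) :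
    ∑ s ∈ range (nL + (nG - 1)), linkWeight nL nG j s r * v s =
      if r + 1 < nL then v (r + 1) else 0 := by
  have hline : ∀ s ∈ range nL, linkWeight nL nG j s r * v s = if r + 1 = s then v s else 0 := by
    intro s hs; rw [mem_range] at hs; unfold linkWeight; split_ifs <;> first | omega | ring
  have hgraph : ∀ s ∈ Ico nL (nL + (nG - 1)), linkWeight nL nG j s r * v s = 0 := by
    intro s hs; rw [mem_Ico] at hs; unfold linkWeight; split_ifs <;> first | omega | ring
  rw [sum_range_split, sum_congr rfl hline, sum_eq_zero hgraph, sum_ite_eq, add_zero]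
  simp only [mem_range]

theorem sum_linkWeight_mul_of_nL_le (v : ℕ → ℝ) (hj0 : 0 < j) (hjL : j ≤ nL) {r : ℕ}
    (hr : nL ≤ r) (hr' : r < nL + (nG - 1)) :
    ∑ s ∈ range (nL + (nG - 1)), linkWeight nL nG j s r * v s =
      v (j - 1) / nG + (∑ s ∈ Ico nL (nL + (nG - 1)), v s - v r) / ((nG : ℝ) - 1) := by
  have hline : ∀ s ∈ range nL,
      linkWeight nL nG j s r * v s = if j - 1 = s then v s / nG else 0 := by
    intro s hs; rw [mem_range] at hs; unfold linkWeight; split_ifs <;> first | omega | ring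
  have hgraph : ∀ s ∈ Ico nL (nL + (nG - 1)),
      linkWeight nL nG j s r * v s = if s ≠ r then v s / ((nG : ℝ) - 1) else 0 := by
    intro s hs; rw [mem_Ico] at hs; unfold linkWeight; split_ifs <;> first | omega | ring
  rw [sum_range_split, sum_congr rfl hline, sum_congr rfl hgraph, sum_ite_eq,
    if_pos (mem_range.mpr (by omega)), ← sum_filter, filter_ne',
    sum_erase_eq_sub (mem_Ico.mpr ⟨hr, hr'⟩), sub_div, sum_div]

theorem linkWeight_nonneg (hnG : 1 ≤ nG) (r s : ℕ) : 0 ≤ linkWeight nL nG j r s := by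
  have : (1 : ℝ) ≤ nG := by exact_mod_cast hnG
  unfold linkWeight
  split_ifs <;> first | rfl | positivity

theorem sum_linkWeight_le_one (hnG : 2 ≤ nG) (hj : 2 ≤ j) (hjL : j ≤ nL) {r : ℕ}
    (hr : r < nL + (nG - 1)) : ∑ s ∈ range (nL + (nG - 1)), linkWeight nL nG j r s ≤ 1 := by
  have hN : (2 : ℝ) ≤ nG := by exact_mod_cast hnG
  rcases lt_or_ge r nL with hrL | hrL
  · by_cases hrj : r + 1 = j
    · rw [sum_range_split]
      have hline : ∀ s ∈ range nL,
          linkWeight nL nG j r s = if j - 2 = s then 1 / (nG : ℝ) else 0 := by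
        intro s hs; rw [mem_range] at hs; unfold linkWeight; split_ifs <;> first | omega | rfl
      have hgraph : ∀ s ∈ Ico nL (nL + (nG - 1)), linkWeight nL nG j r s = 1 / (nG : ℝ) := by
        intro s hs; rw [mem_Ico] at hs; unfold linkWeight; split_ifs <;> first | omega | rfl
      rw [sum_congr rfl hline, sum_congr rfl hgraph, sum_ite_eq,
        if_pos (mem_range.mpr (by omega)), sum_Ico_const (by omega)]
      field_simp; linarith
    · have hrow : ∀ s ∈ range (nL + (nG - 1)),
          linkWeight nL nG j r s ≤ if r - 1 = s then 1 else 0 := by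
        intro s _; unfold linkWeight; split_ifs <;> first | omega | norm_num
      refine (sum_le_sum hrow).trans ?_
      rw [sum_ite_eq]; split_ifs <;> norm_num
  · rw [sum_range_split]
    have hline : ∀ s ∈ range nL,
        linkWeight nL nG j r s = if j - 1 = s then 1 / ((nG : ℝ) - 1) else 0 := by
      intro s hs; rw [mem_range] at hs; unfold linkWeight; split_ifs <;> first | omega | rfl
    have hgraph : ∀ s ∈ Ico nL (nL + (nG - 1)),
        linkWeight nL nG j r s = if s ≠ r then 1 / ((nG : ℝ) - 1) else 0 := by
      intro s hs; rw [mem_Ico] at hs; unfold linkWeight; split_ifs <;> first | omega | rfl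
    rw [sum_congr rfl hline, sum_congr rfl hgraph, sum_ite_eq, if_pos (mem_range.mpr (by omega)),
      ← sum_filter, filter_ne', sum_erase_eq_sub (mem_Ico.mpr ⟨hrL, hr⟩),
      sum_Ico_const (by omega)]
    have : (nG : ℝ) - 1 ≠ 0 := by linarith
    field_simp; rw [div_le_one (by linarith)]; linarith

noncomputable def pageRank (nL nG j : ℕ) (c : ℝ) (i : ℕ) : ℝ :=
  if i + 1 < j then
    c ^ (j - 1 - i) * hubRank nG c (c ^ (nL + 1 - j)) / nG + (1 - c ^ (j - 1 - i)) / (1 - c)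
  else if i + 1 = j then hubRank nG c (c ^ (nL + 1 - j))
  else if i < nL then (1 - c ^ (nL - i)) / (1 - c)
  else graphRank nG c (c ^ (nL - j))

theorem pageRank_of_lt {i : ℕ} (hi : i + 1 < j) :
    pageRank nL nG j c i =
      c ^ (j - 1 - i) * hubRank nG c (c ^ (nL + 1 - j)) / nG + (1 - c ^ (j - 1 - i)) / (1 - c) :=
  if_pos hi

theorem pageRank_hub {i : ℕ} (hi : i + 1 = j) :
    pageRank nL nG j c i = hubRank nG c (c ^ (nL + 1 - j)) := by
  rw [pageRank, if_neg (by omega), if_pos hi]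

theorem pageRank_of_le_of_lt {i : ℕ} (hi : j ≤ i) (hiL : i < nL) :
    pageRank nL nG j c i = (1 - c ^ (nL - i)) / (1 - c) := by
  rw [pageRank, if_neg (by omega), if_neg (by omega), if_pos hiL]

theorem pageRank_of_nL_le {i : ℕ} (hi : nL ≤ i) (hjL : j ≤ nL) :
    pageRank nL nG j c i = graphRank nG c (c ^ (nL - j)) := by
  rw [pageRank, if_neg (by omega), if_neg (by omega), if_neg (by omega)]

theorem sum_Ico_pageRank (hnG : 1 ≤ nG) (hjL : j ≤ nL) :
    ∑ s ∈ Ico nL (nL + (nG - 1)), pageRank nL nG j c s =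
      ((nG : ℝ) - 1) * graphRank nG c (c ^ (nL - j)) := by
  rw [← sum_Ico_const hnG]
  exact sum_congr rfl fun s hs => pageRank_of_nL_le (mem_Ico.mp hs).1 hjL

theorem one_sub_pow_succ_div (hc : c ≠ 1) (m : ℕ) :
    (1 - c ^ (m + 1)) / (1 - c) = 1 + c * ((1 - c ^ m) / (1 - c)) := by
  have : 1 - c ≠ 0 := sub_ne_zero.mpr hc.symm
  field_simp
  ring

theorem pageRank_eq_one_add_sum (hnG : 2 ≤ nG) (hj0 : 0 < j) (hjL : j ≤ nL) (hc : |c| < 1)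
    {r : ℕ} (hr : r < nL + (nG - 1)) :
    pageRank nL nG j c r =
      1 + c * ∑ s ∈ range (nL + (nG - 1)), linkWeight nL nG j s r * pageRank nL nG j c s := by
  have hc1 : c ≠ 1 := (abs_lt.mp hc).2.ne
  have hN : (2 : ℝ) ≤ nG := by exact_mod_cast hnG
  have hpow : c ^ (nL + 1 - j) = c * c ^ (nL - j) := by
    rw [show nL + 1 - j = (nL - j) + 1 by omega, pow_succ']
  rcases lt_trichotomy (r + 1) j with hrj | hrj | hrj
  · rw [sum_linkWeight_mul_of_lt _ hrj hjL, pageRank_of_lt hrj]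
    split_ifs with hrj'
    · rw [pageRank_hub (by omega), show j - 1 - r = 1 by omega, pow_one,
        div_self (sub_ne_zero.mpr hc1.symm)]
      ring
    · rw [pageRank_of_lt (by omega), show j - 1 - r = (j - 1 - (r + 1)) + 1 by omega,
        one_sub_pow_succ_div hc1]
      field_simp
      ring
  · obtain rfl : r = j - 1 := by omega
    have hnext : (if j < nL then pageRank nL nG j c j else 0) = (1 - c ^ (nL - j)) / (1 - c) := by
      split_ifs with hjL'
      · exact pageRank_of_le_of_lt le_rfl hjL'
      · rw [show nL - j = 0 by omega]; simp
    rw [sum_linkWeight_mul_hub _ hj0 hjL, pageRank_hub hrj, sum_Ico_pageRank (by omega) hjL, hnext, hpow,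
      (hubRank_graphRank_solve hN hc _).1]
    field_simp [show (nG : ℝ) - 1 ≠ 0 by linarith]
  · rcases lt_or_ge r nL with hrL | hrL
    · rw [sum_linkWeight_mul_of_le_of_lt _ (by omega) hrL, pageRank_of_le_of_lt (by omega) hrL,
        show nL - r = (nL - (r + 1)) + 1 by omega, one_sub_pow_succ_div hc1]
      split_ifs with hrL'
      · rw [pageRank_of_le_of_lt (by omega) hrL']
      · rw [show nL - (r + 1) = 0 by omega]; simp
    · rw [sum_linkWeight_mul_of_nL_le _ hj0 hjL hrL hr, pageRank_of_nL_le hrL hjL,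
        pageRank_hub (by omega), sum_Ico_pageRank (by omega) hjL, hpow]
      exact (hubRank_graphRank_solve hN hc _).2

theorem inv_one_sub_smul_transpose_mulVec_one_eq_pageRank (hnG : 2 ≤ nG) (hj : 2 ≤ j)
    (hjL : j ≤ nL) (hc : |c| < 1)
    {A : Matrix (Fin (nL + (nG - 1))) (Fin (nL + (nG - 1))) ℝ}
    (hA : ∀ r s, A r s = linkWeight nL nG j r s) :
    (1 - c • Aᵀ)⁻¹ *ᵥ (fun _ => 1) = fun i : Fin (nL + (nG - 1)) => pageRank nL nG j c i := by
  refine inv_one_sub_smul_transpose_mulVec_one (fun r s => ?_) (fun r => ?_) hc (fun r => ?_)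
  · rw [hA]
    exact linkWeight_nonneg (by omega) _ _
  · simp_rw [hA]
    rw [Fin.sum_univ_eq_sum_range (linkWeight nL nG j r)]
    exact sum_linkWeight_le_one hnG hj hjL r.isLt
  · simp_rw [hA]
    rw [Fin.sum_univ_eq_sum_range (fun s => linkWeight nL nG j s r * pageRank nL nG j c s)]
    exact pageRank_eq_one_add_sum hnG (by omega) hjL hc r.isLt

end Network

end LineInCompleteGraph

/-- A simple line on `nL` nodes where node `j` is itself a member of a complete graph
on `nG ≥ 2` nodes (node `j` has `nG` links of weight `1/nG`: one to node `j-1` and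
one to each of the `nG-1` other graph nodes, indices `nL,…,nL+nG-2`): formulas for
the non-normalized PageRank of every node. -/
theorem line_node_in_complete_graph_pagerank (nL nG : ℕ) (hnG : 2 ≤ nG)
    (j : ℕ) (hj1 : 2 ≤ j) (hj2 : j ≤ nL)
    (c : ℝ) (hc0 : 0 < c) (hc1 : c < 1)
    (A : Matrix (Fin (nL + (nG - 1))) (Fin (nL + (nG - 1))) ℝ)
    (hA : ∀ r s : Fin (nL + (nG - 1)), A r s =
      if (r : ℕ) + 1 = j then
        (if (r : ℕ) = (s : ℕ) + 1 ∨ nL ≤ (s : ℕ) then 1 / (nG : ℝ) else 0)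
      else if (r : ℕ) < nL then (if (r : ℕ) = (s : ℕ) + 1 then 1 else 0)
      else (if (nL ≤ (s : ℕ) ∧ s ≠ r) ∨ (s : ℕ) + 1 = j then
        1 / ((nG : ℝ) - 1) else 0))
    (R : Fin (nL + (nG - 1)) → ℝ)
    (hR : R = (1 - c • A.transpose)⁻¹ *ᵥ fun _ => 1)
    (Rj : ℝ)
    (hRj : Rj = ((1 - c ^ (nL + 1 - j)) / (1 - c) +
        c * ((nG : ℝ) - 1) / (((nG : ℝ) - 1) - c * ((nG : ℝ) - 2))) *
      ((nG : ℝ) * (((nG : ℝ) - 1) - c * ((nG : ℝ) - 2)) /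
        ((nG : ℝ) * (((nG : ℝ) - 1) - c * ((nG : ℝ) - 2)) - c ^ 2 * ((nG : ℝ) - 1)))) :
    (∀ i : Fin (nL + (nG - 1)), (i : ℕ) < nL → j < (i : ℕ) + 1 →
        R i = (1 - c ^ (nL - (i : ℕ))) / (1 - c)) ∧
    (∀ i : Fin (nL + (nG - 1)), (i : ℕ) + 1 = j → R i = Rj) ∧
    (∀ i : Fin (nL + (nG - 1)), (i : ℕ) + 1 < j →
        R i = c ^ (j - 1 - (i : ℕ)) * Rj / (nG : ℝ) +
          (1 - c ^ (j - 1 - (i : ℕ))) / (1 - c)) ∧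
    (∀ i : Fin (nL + (nG - 1)), nL ≤ (i : ℕ) →
        R i = ((c + (nG : ℝ)) * ((nG : ℝ) - 1) * (1 - c) +
            ((nG : ℝ) - 1) * c ^ 2 * (1 - c ^ (nL - j))) /
          ((1 - c) * ((nG : ℝ) * ((nG : ℝ) - 1) - ((nG : ℝ) - 1) * c ^ 2 -
            (nG : ℝ) * ((nG : ℝ) - 2) * c))) := by
  have hc : |c| < 1 := abs_lt.mpr ⟨by linarith, hc1⟩
  have hAw : ∀ r s, A r s = LineInCompleteGraph.linkWeight nL nG j r s := fun r s => by
    simp only [hA, LineInCompleteGraph.linkWeight, ne_eq, Fin.ext_iff]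
  rw [LineInCompleteGraph.inv_one_sub_smul_transpose_mulVec_one_eq_pageRank hnG hj1 hj2 hc hAw]
    at hR
  subst hR hRj
  exact ⟨fun i hiL hji => LineInCompleteGraph.pageRank_of_le_of_lt (by omega) hiL,
    fun i hi => LineInCompleteGraph.pageRank_hub hi,
    fun i hi => LineInCompleteGraph.pageRank_of_lt hi,
    fun i hi => LineInCompleteGraph.pageRank_of_nL_le hi hj2⟩
end

section
/- Column sum bound: for any row-substochastic non-negative n×n matrix A and 0 < c < 1, every column sum of (I - cA^T)^{-1} is at most 1/(1-c), with equality for column j if and only if all mass starting from node j is preserved forever (i.e., every power (A^k)_{j·} has row sum 1, meaning no dangling node is reachable from j). -/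
/-!
Nonnegative row-substochastic matrices form a monoid, so the entries of `(c • A) ^ k` lie in
`[0, c ^ k]` and the Neumann series `∑ (c • A) ^ k` converges to `(1 - c • A)⁻¹`. Column `j` of
`(1 - c • Aᵀ)⁻¹` is row `j` of `(1 - c • A)⁻¹`, whose sum is therefore `∑ c ^ k r_k` with
`r_k = ∑ s, (A ^ k) j s ≤ 1`. Comparing termwise with `∑ c ^ k = 1 / (1 - c)` gives the bound,
and since `c ^ k > 0` a single `r_k < 1` makes it strict.
-/

open Finset

namespace Matrix

variable {R n : Type*} [Fintype n] [DecidableEq n]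

section Semiring

variable [Semiring R] [PartialOrder R] [IsOrderedRing R] {M : Matrix n n R}

def rowSubstochastic (R n : Type*) [Fintype n] [DecidableEq n] [Semiring R] [PartialOrder R]
    [IsOrderedRing R] : Submonoid (Matrix n n R) where
  carrier := {M | (∀ i j, 0 ≤ M i j) ∧ ∀ i, ∑ j, M i j ≤ 1}
  mul_mem' {M N} hM hN := by
    refine ⟨fun i j => sum_nonneg fun k _ => mul_nonneg (hM.1 _ _) (hN.1 _ _), fun i => ?_⟩
    calc ∑ j, (M * N) i j = ∑ k, M i k * ∑ j, N k j := by
          simp only [mul_apply, mul_sum]; exact sum_comm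
      _ ≤ ∑ k, M i k := sum_le_sum fun k _ => mul_le_of_le_one_right (hM.1 i k) (hN.2 k)
      _ ≤ 1 := hM.2 i
  one_mem' := by
    refine ⟨fun i j => ?_, fun i => ?_⟩
    · rw [one_apply]; split_ifs <;> simp
    · simp [one_apply]

lemma le_one_of_mem_rowSubstochastic (hM : M ∈ rowSubstochastic R n) (i j : n) :
    M i j ≤ 1 :=
  (single_le_sum (fun k _ => hM.1 i k) (mem_univ j)).trans (hM.2 i)

end Semiring

variable {M : Matrix n n ℝ} {c : ℝ}

lemma summable_smul_pow_of_mem_rowSubstochastic (hM : M ∈ rowSubstochastic ℝ n)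
    (hc0 : 0 ≤ c) (hc1 : c < 1) : Summable fun k : ℕ => (c • M) ^ k := by
  refine Pi.summable.mpr fun i => Pi.summable.mpr fun j => ?_
  have hMk := pow_mem hM
  refine (summable_geometric_of_lt_one hc0 hc1).of_nonneg_of_le (fun k => ?_) (fun k => ?_)
  · simpa [smul_pow] using mul_nonneg (pow_nonneg hc0 k) ((hMk k).1 i j)
  · simpa [smul_pow] using
      mul_le_of_le_one_right (pow_nonneg hc0 k) (le_one_of_mem_rowSubstochastic (hMk k) i j)

lemma hasSum_pow_mul_sum_row_inv_one_sub_smul (hM : M ∈ rowSubstochastic ℝ n)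
    (hc0 : 0 ≤ c) (hc1 : c < 1) (i : n) :
    HasSum (fun k : ℕ => c ^ k * ∑ j, (M ^ k) i j) (∑ j, (1 - c • M)⁻¹ i j) := by
  have hsum := summable_smul_pow_of_mem_rowSubstochastic hM hc0 hc1
  have hinv : (1 - c • M)⁻¹ = ∑' k : ℕ, (c • M) ^ k := inv_eq_left_inv hsum.tsum_pow_mul_one_sub
  rw [hinv]
  simpa [smul_pow, mul_sum] using
    hasSum_sum fun j _ => Pi.hasSum.mp (Pi.hasSum.mp hsum.hasSum i) j

end Matrix

lemma hasSum_pow_mul_le_inv_one_sub {c S : ℝ} {r : ℕ → ℝ} (hc0 : 0 ≤ c) (hc1 : c < 1)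
    (hr : ∀ k, r k ≤ 1) (hS : HasSum (fun k => c ^ k * r k) S) : S ≤ (1 - c)⁻¹ :=
  hasSum_le (fun k => mul_le_of_le_one_right (pow_nonneg hc0 k) (hr k)) hS
    (hasSum_geometric_of_lt_one hc0 hc1)

lemma hasSum_pow_mul_eq_inv_one_sub_iff {c S : ℝ} {r : ℕ → ℝ} (hc0 : 0 < c) (hc1 : c < 1)
    (hr : ∀ k, r k ≤ 1) (hS : HasSum (fun k => c ^ k * r k) S) :
    S = (1 - c)⁻¹ ↔ ∀ k, r k = 1 := by
  have hgeom := hasSum_geometric_of_lt_one hc0.le hc1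
  refine ⟨fun hSeq k => ?_, fun h1 => hS.unique (by simpa [h1] using hgeom)⟩
  by_contra hk
  have hlt : c ^ k * r k < c ^ k := mul_lt_of_lt_one_right (pow_pos hc0 k) ((hr k).lt_of_ne hk)
  exact (hasSum_lt (fun k => mul_le_of_le_one_right (pow_nonneg hc0.le k) (hr k))
    (by simpa using hlt) hS hgeom).ne hSeq

open Matrix

/-- Column sum bound: for a non-negative row-substochastic matrix `A` and `0 < c < 1`,
every column sum of `(I - cAᵀ)⁻¹` is at most `1/(1-c)`, with equality for column `j`
if and only if every power `A^k` has row `j` summing to `1` (no dangling node is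
reachable from `j`). -/
theorem column_sum_bound (n : ℕ) (c : ℝ) (hc0 : 0 < c) (hc1 : c < 1)
    (A : Matrix (Fin n) (Fin n) ℝ)
    (hA_nonneg : ∀ i j : Fin n, 0 ≤ A i j)
    (hA_rows : ∀ i : Fin n, ∑ j, A i j ≤ 1) :
    ∀ j : Fin n,
      (∑ i, (1 - c • A.transpose)⁻¹ i j) ≤ 1 / (1 - c) ∧
      ((∑ i, (1 - c • A.transpose)⁻¹ i j) = 1 / (1 - c) ↔
        ∀ k : ℕ, ∑ s, (A ^ k) j s = 1) := by
  intro j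
  have hA : A ∈ rowSubstochastic ℝ (Fin n) := ⟨hA_nonneg, hA_rows⟩
  have hcol : ∑ i, (1 - c • Aᵀ)⁻¹ i j = ∑ s, (1 - c • A)⁻¹ j s := by
    rw [← transpose_transpose (1 - c • A)⁻¹, transpose_nonsing_inv, transpose_sub,
      transpose_smul, transpose_one]
    rfl
  have hS := hasSum_pow_mul_sum_row_inv_one_sub_smul hA hc0.le hc1 j
  have hr k : ∑ s, (A ^ k) j s ≤ 1 := (pow_mem hA k).2 j
  rw [hcol, one_div]
  exact ⟨hasSum_pow_mul_le_inv_one_sub hc0.le hc1 hr hS,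
    hasSum_pow_mul_eq_inv_one_sub_iff hc0 hc1 hr hS⟩
end
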